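/- (Equality of the NTW interpolant and its affine relative.) Let K be a nondegenerate triangle with vertices a₁, a₂, a₃ ∈ ℝ². For every continuously differentiable function v : ℝ² → ℝ, the NTW interpolant and its affine relative coincide: Σ_{i=1}^{3} [ v(a_i) φ_i + v(b_i) χ_i + (⨍_{e_i} n_i·∇v) ψ_i ] = Σ_{i=1}^{3} [ v(a_i) φ̃_i + v(b_i) χ_i + (⨍_{e_i} m_i·∇v) ψ̃_i ] as functions on ℝ². -/

import Mathlib

open RealInnerProductSpace MeasureTheory

noncomputable section

/-- Barycentric coordinate `λ_i(x) = c_i + ⟪g_i, x⟫` (with constant gradient `g_i`). -/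
def lam (g : Fin 3 → EuclideanSpace ℝ (Fin 2)) (c : Fin 3 → ℝ) (i : Fin 3)
    (x : EuclideanSpace ℝ (Fin 2)) : ℝ := c i + ⟪g i, x⟫

/-- Cubic bubble `b_K = λ₁ λ₂ λ₃`. -/
def bub (g : Fin 3 → EuclideanSpace ℝ (Fin 2)) (c : Fin 3 → ℝ)
    (x : EuclideanSpace ℝ (Fin 2)) : ℝ :=
  lam g c 0 x * lam g c 1 x * lam g c 2 x

/-- NTW vertex basis function
`φ_i = λ_i(2λ_i − 1) − 6 b_K (2λ_i − 1) + 6 b_K Σ_{j≠i} ((∇λ_i·∇λ_j)/‖∇λ_j‖²)(2λ_j − 1)`. -/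
def phi (g : Fin 3 → EuclideanSpace ℝ (Fin 2)) (c : Fin 3 → ℝ) (i : Fin 3)
    (x : EuclideanSpace ℝ (Fin 2)) : ℝ :=
  lam g c i x * (2 * lam g c i x - 1) - 6 * bub g c x * (2 * lam g c i x - 1)
    + 6 * bub g c x *
      ∑ j ∈ Finset.univ.erase i, (⟪g i, g j⟫ / ‖g j‖ ^ 2) * (2 * lam g c j x - 1)

/-- NTW midpoint basis function `χ_i = 4 λ_j λ_k + 12 b_K (1 − 4λ_i)`. -/
def chi (g : Fin 3 → EuclideanSpace ℝ (Fin 2)) (c : Fin 3 → ℝ) (i : Fin 3)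
    (x : EuclideanSpace ℝ (Fin 2)) : ℝ :=
  4 * lam g c (i + 1) x * lam g c (i + 2) x + 12 * bub g c x * (1 - 4 * lam g c i x)

/-- NTW normal-moment basis function `ψ_i = 6 b_K (2λ_i − 1)/‖∇λ_i‖`. -/
def psi (g : Fin 3 → EuclideanSpace ℝ (Fin 2)) (c : Fin 3 → ℝ) (i : Fin 3)
    (x : EuclideanSpace ℝ (Fin 2)) : ℝ :=
  6 * bub g c x * (2 * lam g c i x - 1) / ‖g i‖

/-- Affine relative `φ̃_i = λ_i(2λ_i − 1) + 6 b_K (1 − λ_i)`. -/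
def phiT (g : Fin 3 → EuclideanSpace ℝ (Fin 2)) (c : Fin 3 → ℝ) (i : Fin 3)
    (x : EuclideanSpace ℝ (Fin 2)) : ℝ :=
  lam g c i x * (2 * lam g c i x - 1) + 6 * bub g c x * (1 - lam g c i x)

/-- Affine relative `ψ̃_i = 6 b_K (2λ_i − 1)`. -/
def psiT (g : Fin 3 → EuclideanSpace ℝ (Fin 2)) (c : Fin 3 → ℝ) (i : Fin 3)
    (x : EuclideanSpace ℝ (Fin 2)) : ℝ :=
  6 * bub g c x * (2 * lam g c i x - 1)

/-- Midpoint `b_i = (a_j + a_k)/2` of the edge `e_i` opposite the vertex `a_i`. -/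
def emid (a : Fin 3 → EuclideanSpace ℝ (Fin 2)) (i : Fin 3) : EuclideanSpace ℝ (Fin 2) :=
  (1 / 2 : ℝ) • (a (i + 1) + a (i + 2))

/-- Edge average `⨍_{e_i} f = ∫₀¹ f(a_j + t(a_k − a_j)) dt`. -/
def edgeAvg (a : Fin 3 → EuclideanSpace ℝ (Fin 2)) (i : Fin 3)
    (f : EuclideanSpace ℝ (Fin 2) → ℝ) : ℝ :=
  ∫ t in (0 : ℝ)..1, f (a (i + 1) + t • (a (i + 2) - a (i + 1)))

/-- Outward unit normal `n_i = −∇λ_i/‖∇λ_i‖` of the edge `e_i`. -/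
def nvec (g : Fin 3 → EuclideanSpace ℝ (Fin 2)) (i : Fin 3) : EuclideanSpace ℝ (Fin 2) :=
  -(‖g i‖⁻¹ • g i)

/-! The two interpolants share the midpoint terms, so only the vertex terms and the edge moments
have to be compared. In the plane the gradients `g j`, `g k` and the edges `a j - a i`,
`a k - a i` are biorthogonal, which yields `∑ g i = 0`, `∑ λ i = 1`, and the splitting of the
median `m_i = -g_i / ‖g_i‖² + s_i (a_k - a_j)` into a normal and a tangential part. The normal
part reproduces the NTW normal moment `(⨍ n_i·∇v) ψ_i` exactly, while the tangential part
integrates to `s_i (v(a_k) - v(a_j))` by the fundamental theorem of calculus. These vertex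
values are absorbed by the identity `φ_i - φ̃_i = s_j ψ̃_j - s_k ψ̃_k`, where
`s_i = medianTangentCoeff g i`. -/

section Biorthogonal

variable {E : Type*} [NormedAddCommGroup E] [InnerProductSpace ℝ E] [FiniteDimensional ℝ E]
  {ι : Type*} [Fintype ι] [DecidableEq ι]

theorem eq_sum_inner_smul_of_biorthogonal (hcard : Fintype.card ι = Module.finrank ℝ E)
    {p w : ι → E} (hpw : ∀ i j, ⟪p i, w j⟫ = if i = j then 1 else 0) (d : E) :
    d = ∑ j, ⟪p j, d⟫ • w j := by
  have hw : LinearIndependent ℝ w := by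
    refine linearIndependent_iff'.2 fun s f hsum i hi => ?_
    simpa [inner_sum, real_inner_smul_right, hpw, hi] using congrArg (⟪p i, ·⟫) hsum
  let b := basisOfLinearIndependentOfCardEqFinrank' w hw hcard
  have hrepr : ∀ j, b.repr d j = ⟪p j, d⟫ := fun j => by
    conv_rhs => rw [← b.sum_repr d]
    simp [b, inner_sum, real_inner_smul_right, hpw]
  calc d = ∑ j, b.repr d j • b j := (b.sum_repr d).symm
    _ = ∑ j, ⟪p j, d⟫ • w j := by simp only [hrepr, b, coe_basisOfLinearIndependentOfCardEqFinrank']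

end Biorthogonal

theorem Fin.sum_univ_three_rotate {M : Type*} [AddCommMonoid M] (f : Fin 3 → M) (i : Fin 3) :
    ∑ j, f j = f i + f (i + 1) + f (i + 2) := by
  fin_cases i <;> simp [Fin.sum_univ_three] <;> abel

theorem integral_fderiv_add_smul_self {E : Type*} [NormedAddCommGroup E] [NormedSpace ℝ E]
    {v : E → ℝ} (hv : ContDiff ℝ 1 v) (p d : E) :
    ∫ t in (0 : ℝ)..1, fderiv ℝ v (p + t • d) d = v (p + d) - v p := by
  have hderiv : ∀ t : ℝ, HasDerivAt (fun s : ℝ => v (p + s • d)) (fderiv ℝ v (p + t • d) d) t :=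
    fun t => (hv.differentiable one_ne_zero _).hasFDerivAt.comp_hasDerivAt t
      (((hasDerivAt_id t).smul_const d).const_add p |>.congr_deriv (one_smul ℝ d))
  have hcont : Continuous fun t : ℝ => fderiv ℝ v (p + t • d) d := by fun_prop
  simpa using intervalIntegral.integral_eq_sub_of_hasDerivAt (fun t _ => hderiv t)
    (hcont.intervalIntegrable 0 1)

theorem intervalIntegral_fderiv_add_smul_apply {E : Type*} [NormedAddCommGroup E]
    [NormedSpace ℝ E] {v : E → ℝ} (hv : ContDiff ℝ 1 v) (p d w : E) :
    ∫ t in (0 : ℝ)..1, fderiv ℝ v (p + t • d) w = (∫ t in (0 : ℝ)..1, fderiv ℝ v (p + t • d)) w := by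
  have hcont : Continuous fun t : ℝ => fderiv ℝ v (p + t • d) :=
    (hv.continuous_fderiv one_ne_zero).comp (by fun_prop)
  exact (ContinuousLinearMap.intervalIntegral_apply (hcont.intervalIntegrable 0 1) w).symm

def IsBarycentric (a g : Fin 3 → EuclideanSpace ℝ (Fin 2)) (c : Fin 3 → ℝ) : Prop :=
  ∀ i m : Fin 3, lam g c i (a m) = if i = m then 1 else 0

def medianTangentCoeff (g : Fin 3 → EuclideanSpace ℝ (Fin 2)) (i : Fin 3) : ℝ :=
  1 / 2 + ⟪g i, g (i + 2)⟫ / ‖g i‖ ^ 2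

namespace IsBarycentric

variable {a g : Fin 3 → EuclideanSpace ℝ (Fin 2)} {c : Fin 3 → ℝ}

theorem inner_sub (h : IsBarycentric a g c) (i m n : Fin 3) :
    ⟪g i, a m - a n⟫ = (if i = m then 1 else 0) - (if i = n then 1 else 0) := by
  rw [← h i m, ← h i n, lam, lam, inner_sub_right]
  ring

theorem eq_inner_smul_add_inner_smul (h : IsBarycentric a g c) (i : Fin 3)
    (d : EuclideanSpace ℝ (Fin 2)) :
    d = ⟪g (i + 1), d⟫ • (a (i + 1) - a i) + ⟪g (i + 2), d⟫ • (a (i + 2) - a i) := by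
  have hbi : ∀ j k : Fin 2, ⟪![g (i + 1), g (i + 2)] j, ![a (i + 1) - a i, a (i + 2) - a i] k⟫
      = if j = k then 1 else 0 := by
    intro j k
    fin_cases j <;> fin_cases k <;> simp [h.inner_sub]
  simpa using eq_sum_inner_smul_of_biorthogonal (by simp) hbi d

theorem sum_grad_eq_zero (h : IsBarycentric a g c) : ∑ i, g i = 0 := by
  have hG : ∀ m, ⟪∑ i, g i, a m - a 0⟫ = 0 := by
    intro m
    rw [sum_inner]
    fin_cases m <;> simp [h.inner_sub]
  rw [← inner_self_eq_zero (𝕜 := ℝ)]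
  nth_rewrite 2 [h.eq_inner_smul_add_inner_smul 0 (∑ i, g i)]
  simp [inner_add_right, real_inner_smul_right, hG]

theorem sum_lam_eq_one (h : IsBarycentric a g c) (x : EuclideanSpace ℝ (Fin 2)) :
    ∑ i, lam g c i x = 1 := by
  have hx : ∑ i, ⟪g i, x⟫ = 0 := by rw [← sum_inner, h.sum_grad_eq_zero, inner_zero_left]
  have ha : ∑ i, ⟪g i, a 0⟫ = 0 := by rw [← sum_inner, h.sum_grad_eq_zero, inner_zero_left]
  have hc : ∑ i, lam g c i (a 0) = 1 := by simp [h _ 0]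
  simp only [lam, Finset.sum_add_distrib] at hc ⊢
  linarith

theorem grad_ne_zero (h : IsBarycentric a g c) (i : Fin 3) : g i ≠ 0 := by
  intro hi
  simpa [hi] using h.inner_sub i i (i + 1)

theorem grad_eq (h : IsBarycentric a g c) (i : Fin 3) :
    g i = ‖g i‖ ^ 2 • (a i - a (i + 1)) + ⟪g i, g (i + 2)⟫ • (a (i + 2) - a (i + 1)) := by
  have := h.eq_inner_smul_add_inner_smul (i + 1) (g i)
  rw [add_assoc, add_assoc, show (1 : Fin 3) + 1 = 2 from rfl, show (1 : Fin 3) + 2 = 0 from rfl,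
    add_zero, real_inner_self_eq_norm_sq, real_inner_comm] at this
  exact this.trans (add_comm _ _)

theorem emid_sub_eq (h : IsBarycentric a g c) (i : Fin 3) :
    emid a i - a i
      = -(‖g i‖ ^ 2)⁻¹ • g i + medianTangentCoeff g i • (a (i + 2) - a (i + 1)) := by
  have hq : ‖g i‖ ^ 2 ≠ 0 := by simpa using h.grad_ne_zero i
  have hg := h.grad_eq i
  rw [medianTangentCoeff, emid]
  generalize ‖g i‖ ^ 2 = q at hq hg ⊢
  generalize ⟪g i, g (i + 2)⟫ = r at hg ⊢
  rw [hg]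
  match_scalars <;> field_simp <;> ring

theorem edgeAvg_fderiv_nvec_mul_psi (h : IsBarycentric a g c)
    {v : EuclideanSpace ℝ (Fin 2) → ℝ} (hv : ContDiff ℝ 1 v) (i : Fin 3)
    (x : EuclideanSpace ℝ (Fin 2)) :
    edgeAvg a i (fun y => fderiv ℝ v y (nvec g i)) * psi g c i x
      = (edgeAvg a i (fun y => fderiv ℝ v y (emid a i - a i))
          - medianTangentCoeff g i * (v (a (i + 2)) - v (a (i + 1)))) * psiT g c i x := by
  have hg : ‖g i‖ ≠ 0 := norm_ne_zero_iff.2 (h.grad_ne_zero i)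
  have htangent : edgeAvg a i (fun y => fderiv ℝ v y (a (i + 2) - a (i + 1)))
      = v (a (i + 2)) - v (a (i + 1)) := by
    rw [edgeAvg, integral_fderiv_add_smul_self hv, add_sub_cancel]
  have hlin : ∀ w, edgeAvg a i (fun y => fderiv ℝ v y w)
      = (∫ t in (0 : ℝ)..1, fderiv ℝ v (a (i + 1) + t • (a (i + 2) - a (i + 1)))) w :=
    intervalIntegral_fderiv_add_smul_apply hv _ _
  rw [h.emid_sub_eq, ← htangent, hlin, hlin, hlin]
  simp only [nvec, map_add, map_neg, map_smul, smul_eq_mul, psi, psiT]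
  field_simp
  ring

theorem phi_sub_phiT (h : IsBarycentric a g c) (i : Fin 3) (x : EuclideanSpace ℝ (Fin 2)) :
    phi g c i x - phiT g c i x
      = medianTangentCoeff g (i + 1) * psiT g c (i + 1) x
        - medianTangentCoeff g (i + 2) * psiT g c (i + 2) x := by
  have herase : Finset.univ.erase i = {i + 1, i + 2} := by revert i; decide
  have hne : i + 1 ≠ i + 2 := by revert i; decide
  have hlam := h.sum_lam_eq_one x
  rw [Fin.sum_univ_three_rotate _ i] at hlam
  have hgrad := congrArg (⟪·, g (i + 2)⟫) h.sum_grad_eq_zero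
  simp only [Fin.sum_univ_three_rotate _ i, inner_add_left, inner_zero_left,
    real_inner_self_eq_norm_sq] at hgrad
  have h1 : ‖g (i + 1)‖ ≠ 0 := norm_ne_zero_iff.2 (h.grad_ne_zero _)
  have h2 : ‖g (i + 2)‖ ≠ 0 := norm_ne_zero_iff.2 (h.grad_ne_zero _)
  simp only [phi, phiT, psiT, medianTangentCoeff, herase, Finset.sum_pair hne, add_assoc,
    show (1 : Fin 3) + 2 = 0 from rfl, show (2 : Fin 3) + 2 = 1 from rfl, add_zero]
  rw [real_inner_comm (g (i + 1)) (g i), real_inner_comm (g (i + 1)) (g (i + 2))]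
  field_simp
  linear_combination 12 * bub g c x * ‖g (i + 1)‖ ^ 2 *
    ((2 * lam g c (i + 2) x - 1) * hgrad - ‖g (i + 2)‖ ^ 2 * hlam)

end IsBarycentric

theorem ntw_interpolant_eq_affine_relative_general
    (a g : Fin 3 → EuclideanSpace ℝ (Fin 2)) (c : Fin 3 → ℝ)
    (hlam : ∀ i m : Fin 3, lam g c i (a m) = if i = m then 1 else 0)
    (v : EuclideanSpace ℝ (Fin 2) → ℝ) (hv : ContDiff ℝ 1 v) :
    ∀ x : EuclideanSpace ℝ (Fin 2),
      ∑ i : Fin 3, (v (a i) * phi g c i x + v (emid a i) * chi g c i x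
          + edgeAvg a i (fun y => fderiv ℝ v y (nvec g i)) * psi g c i x)
        = ∑ i : Fin 3, (v (a i) * phiT g c i x + v (emid a i) * chi g c i x
          + edgeAvg a i (fun y => fderiv ℝ v y (emid a i - a i)) * psiT g c i x) := by
  intro x
  have hphi (i : Fin 3) := eq_add_of_sub_eq' (IsBarycentric.phi_sub_phiT hlam i x)
  simp only [Fin.sum_univ_three, hphi, IsBarycentric.edgeAvg_fderiv_nvec_mul_psi hlam hv,
    Fin.reduceAdd]
  ring

/-- Equality of the NTW interpolant and its affine relative: for a nondegenerate triangle
with vertices `a₁, a₂, a₃` and every `C¹` function `v : ℝ² → ℝ`,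
`Σ_i [v(a_i) φ_i + v(b_i) χ_i + (⨍_{e_i} n_i·∇v) ψ_i]
  = Σ_i [v(a_i) φ̃_i + v(b_i) χ_i + (⨍_{e_i} m_i·∇v) ψ̃_i]` with `m_i = b_i − a_i`. -/
theorem ntw_interpolant_eq_affine_relative
    (a g : Fin 3 → EuclideanSpace ℝ (Fin 2)) (c : Fin 3 → ℝ)
    (hind : AffineIndependent ℝ a)
    (hlam : ∀ i m : Fin 3, lam g c i (a m) = if i = m then 1 else 0)
    (v : EuclideanSpace ℝ (Fin 2) → ℝ) (hv : ContDiff ℝ 1 v) :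
    ∀ x : EuclideanSpace ℝ (Fin 2),
      ∑ i : Fin 3, (v (a i) * phi g c i x + v (emid a i) * chi g c i x
          + edgeAvg a i (fun y => fderiv ℝ v y (nvec g i)) * psi g c i x)
        = ∑ i : Fin 3, (v (a i) * phiT g c i x + v (emid a i) * chi g c i x
          + edgeAvg a i (fun y => fderiv ℝ v y (emid a i - a i)) * psiT g c i x) :=
  ntw_interpolant_eq_affine_relative_general a g c hlam v hv
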